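/- arXiv:2502.05355 — 2 statements merged into one kernel-verified Lean document; each statement's English description precedes it below -/
import Mathlib

section
/- Let A = P − N with P ∈ R^{n×n} nonsingular, and consider GMRES applied to the left-preconditioned system P^{−1}Ax = P^{−1}b. Define r_{j,pr} = P^{−1}A x_j − P^{−1}b. Let full NGMRES be applied to accelerate the fixed-point iteration q_{pr}(x) = (I − P^{−1}A)x + P^{−1}b. Assume full AA, full NGMRES, and GMRES use the same initial guess x_0 ≠ x*, and for some k_0 > 0 the preconditioned NGMRES residuals satisfy r_{k_0−1,pr}^{NG} ≠ 0 and ‖r_{k−1,pr}^{NG}‖₂ > ‖r_{k,pr}^{NG}‖₂ for each k with 0 < k < k_0. Then r_j^{NG} = r_j^G for 0 ≤ j ≤ k_0; moreover, if A is invertible, then x_j^{NG} = x_j^G and x_{j+1}^A = q_{pr}(x_j^{NG}) = x_j^{NG} − r_{j,pr}^{NG} for 0 ≤ j ≤ k_0. -/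
open Matrix Filter

noncomputable section

/-- The residual `r(x) = A x - b` of the linear system `A x = b`. -/
def residv {n : ℕ} (A : Matrix (Fin n) (Fin n) ℝ) (b x : Fin n → ℝ) : Fin n → ℝ :=
  A.mulVec x - b

/-- The Euclidean 2-norm on `Fin n → ℝ`. -/
def norm2 {n : ℕ} (x : Fin n → ℝ) : ℝ := Real.sqrt (x ⬝ᵥ x)

/-- The fixed-point map `q(x) = M x + b` with `M = I - A`. -/
def qmap {n : ℕ} (A : Matrix (Fin n) (Fin n) ℝ) (b x : Fin n → ℝ) : Fin n → ℝ :=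
  (1 - A).mulVec x + b

/-- One NGMRES update from step `k`, with window `mk` and coefficients `β`:
`x_{k+1} = q(x_k) + ∑_{i=0}^{mk} β_i (q(x_k) - x_{k-i})`. -/
def ngmresUpdate {n : ℕ} (A : Matrix (Fin n) (Fin n) ℝ) (b : Fin n → ℝ)
    (x : ℕ → Fin n → ℝ) (β : ℕ → ℝ) (k mk : ℕ) : Fin n → ℝ :=
  qmap A b (x k) + ∑ i ∈ Finset.range (mk + 1), β i • (qmap A b (x k) - x (k - i))

/-- The NGMRES iteration with window function `mk` (e.g. `mk k = min k m` for NGMRES(m),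
`mk k = k` for full NGMRES): each step uses coefficients minimizing the 2-norm of the
next residual. -/
def IsNGMRES {n : ℕ} (A : Matrix (Fin n) (Fin n) ℝ) (b x0 : Fin n → ℝ) (mk : ℕ → ℕ)
    (x : ℕ → Fin n → ℝ) (β : ℕ → ℕ → ℝ) : Prop :=
  x 0 = x0 ∧ ∀ k, x (k + 1) = ngmresUpdate A b x (β k) k (mk k) ∧
    ∀ β' : ℕ → ℝ, norm2 (residv A b (x (k + 1))) ≤
      norm2 (residv A b (ngmresUpdate A b x β' k (mk k)))

/-- The Krylov subspace `span {r0, A r0, …, A^{k-1} r0}`. -/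
def krylov {n : ℕ} (A : Matrix (Fin n) (Fin n) ℝ) (r0 : Fin n → ℝ) (k : ℕ) :
    Submodule ℝ (Fin n → ℝ) :=
  Submodule.span ℝ {v | ∃ i < k, v = (A ^ i).mulVec r0}

/-- GMRES: `x_k` minimizes the residual 2-norm over the affine space `x0 + K_k`. -/
def IsGMRES {n : ℕ} (A : Matrix (Fin n) (Fin n) ℝ) (b x0 : Fin n → ℝ)
    (x : ℕ → Fin n → ℝ) : Prop :=
  x 0 = x0 ∧ ∀ k, x k - x0 ∈ krylov A (residv A b x0) k ∧
    ∀ y : Fin n → ℝ, y - x0 ∈ krylov A (residv A b x0) k →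
      norm2 (residv A b (x k)) ≤ norm2 (residv A b y)

/-- One Anderson acceleration update from step `k`, with window `mk`:
`x_{k+1} = q(x_k) + ∑_{i=1}^{mk} γ_i (q(x_k) - q(x_{k-i}))`. -/
def aaUpdate {n : ℕ} (A : Matrix (Fin n) (Fin n) ℝ) (b : Fin n → ℝ)
    (x : ℕ → Fin n → ℝ) (γ : ℕ → ℝ) (k mk : ℕ) : Fin n → ℝ :=
  qmap A b (x k) + ∑ i ∈ Finset.Icc 1 mk, γ i • (qmap A b (x k) - qmap A b (x (k - i)))

/-- The Anderson acceleration least-squares objective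
`r(x_k) + ∑_{i=1}^{mk} γ_i (r(x_k) - r(x_{k-i}))`. -/
def aaObj {n : ℕ} (A : Matrix (Fin n) (Fin n) ℝ) (b : Fin n → ℝ)
    (x : ℕ → Fin n → ℝ) (γ : ℕ → ℝ) (k mk : ℕ) : Fin n → ℝ :=
  residv A b (x k) + ∑ i ∈ Finset.Icc 1 mk, γ i • (residv A b (x k) - residv A b (x (k - i)))

/-- Anderson acceleration with window function `mk`. -/
def IsAA {n : ℕ} (A : Matrix (Fin n) (Fin n) ℝ) (b x0 : Fin n → ℝ) (mk : ℕ → ℕ)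
    (x : ℕ → Fin n → ℝ) (γ : ℕ → ℕ → ℝ) : Prop :=
  x 0 = x0 ∧ ∀ k, x (k + 1) = aaUpdate A b x (γ k) k (mk k) ∧
    ∀ γ' : ℕ → ℝ, norm2 (aaObj A b x (γ k) k (mk k)) ≤ norm2 (aaObj A b x γ' k (mk k))

/-- The spectral norm `‖A‖₂` (the ℓ²→ℓ² operator norm). -/
def specNorm {n : ℕ} (A : Matrix (Fin n) (Fin n) ℝ) : ℝ :=
  ‖LinearMap.toContinuousLinearMap (Matrix.toEuclideanLin A)‖

/-- The spectral radius of a real matrix (computed over `ℂ`). -/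
def specRad {n : ℕ} (M : Matrix (Fin n) (Fin n) ℝ) : ℝ :=
  (spectralRadius ℂ (M.map Complex.ofReal)).toReal

/-!
Write `r(x) = M x - c` with `M = P⁻¹ A`, `c = P⁻¹ b`, and `K_k` for the Krylov spaces of `M` and
`r(x₀)`. By induction, every NGMRES iterate `x_k` (`k ≤ k₀`) minimizes `‖r‖` over `x₀ + K_k`:
strict decrease of the residuals forces `x_i - x₀ ∉ K_{i-1}`, so the vectors `x_i - x₀` (`i ≤ k`)
span `K_k`, and the NGMRES search space `q(x_k) + span {q(x_k) - x_{k-i}}` is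
`x₀ + K_k + ℝ r(x_k) = x₀ + K_{k+1}`. A minimizer of the strictly convex `‖r‖` over an affine
space has a unique residual, which gives the GMRES residuals; when `M` is invertible `r` is
injective, so the iterates agree as well.

If the AA iterates are `x₀, q(x₀), …, q(x_{m-1})`, AA minimizes `‖r‖` over their affine span, which
is again `x₀ + K_m` because `q(x) - q(y) = (I - M)(x - y)`. Its minimizer is therefore `x_m`, and
since `q` is affine the next AA iterate is `q(x_m)`.
-/

theorem exists_eq_add_sum_smul_iff {R E α : Type*} [Ring R] [AddCommGroup E] [Module R E]
    {K : Submodule R E} {p x0 : E} {s : Finset α} {g : α → E}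
    (hp : p - x0 ∈ K) (hg : Submodule.span R (g '' s) = K) (y : E) :
    y - x0 ∈ K ↔ ∃ β : α → R, y = p + ∑ i ∈ s, β i • g i := by
  rw [← K.sub_mem_iff_left hp, sub_sub_sub_cancel_right, ← hg,
    Submodule.mem_span_image_finset_iff_exists_fun']
  simp only [eq_comm (b := y - p), sub_eq_iff_eq_add']

section Norm2

variable {n : ℕ}

theorem eq_of_norm2_le_norm2_midpoint {a b : Fin n → ℝ}
    (ha : norm2 a ≤ norm2 ((1 / 2 : ℝ) • (a + b)))
    (hb : norm2 b ≤ norm2 ((1 / 2 : ℝ) • (a + b))) : a = b := by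
  have sq_le {u v : Fin n → ℝ} (h : norm2 u ≤ norm2 v) : u ⬝ᵥ u ≤ v ⬝ᵥ v :=
    (Real.sqrt_le_sqrt_iff (Finset.sum_nonneg fun _ _ => mul_self_nonneg _)).mp h
  have hmid : ((1 / 2 : ℝ) • (a + b)) ⬝ᵥ ((1 / 2 : ℝ) • (a + b)) = (a + b) ⬝ᵥ (a + b) / 4 := by
    rw [smul_dotProduct, dotProduct_smul, smul_eq_mul, smul_eq_mul]; ring
  have parallelogram :
      (a - b) ⬝ᵥ (a - b) + (a + b) ⬝ᵥ (a + b) = 2 * (a ⬝ᵥ a) + 2 * (b ⬝ᵥ b) := by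
    simp only [dotProduct, Pi.add_apply, Pi.sub_apply, Finset.mul_sum, ← Finset.sum_add_distrib]
    exact Finset.sum_congr rfl fun i _ => by ring
  have hle : (a - b) ⬝ᵥ (a - b) ≤ 0 := by
    nlinarith [sq_le ha, sq_le hb]
  exact sub_eq_zero.mp (dotProduct_self_eq_zero.mp
    (le_antisymm hle (Finset.sum_nonneg fun _ _ => mul_self_nonneg _)))

end Norm2

section Krylov

variable {n : ℕ} {M : Matrix (Fin n) (Fin n) ℝ} {r0 v : Fin n → ℝ} {k : ℕ}

@[simp]
theorem krylov_zero : krylov M r0 0 = ⊥ := by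
  simp [krylov]

theorem krylov_succ (k : ℕ) : krylov M r0 (k + 1) = krylov M r0 k ⊔ ℝ ∙ (M ^ k) *ᵥ r0 := by
  have hset : {v | ∃ i < k + 1, v = (M ^ i) *ᵥ r0}
      = insert ((M ^ k) *ᵥ r0) {v | ∃ i < k, v = (M ^ i) *ᵥ r0} := by
    ext v
    simp only [Set.mem_ofPred_eq, Set.mem_insert_iff, Nat.lt_succ_iff_lt_or_eq, or_and_right,
      exists_or, exists_eq_left, or_comm (a := ∃ _, _), eq_comm (a := v)]
  rw [krylov, hset, Submodule.span_insert, sup_comm, krylov]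

theorem krylov_mono : Monotone (krylov M r0) :=
  monotone_nat_of_le_succ fun k => (krylov_succ k).symm ▸ le_sup_left

theorem pow_mulVec_mem_krylov {i : ℕ} (h : i < k) : (M ^ i) *ᵥ r0 ∈ krylov M r0 k :=
  Submodule.subset_span ⟨i, h, rfl⟩

theorem self_mem_krylov (hk : 0 < k) : r0 ∈ krylov M r0 k := by
  simpa using pow_mulVec_mem_krylov (M := M) (r0 := r0) hk

theorem mulVec_mem_krylov_succ (h : v ∈ krylov M r0 k) : M *ᵥ v ∈ krylov M r0 (k + 1) := by
  induction h using Submodule.span_induction with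
  | mem x hx =>
    obtain ⟨i, hi, rfl⟩ := hx
    rw [mulVec_mulVec, ← pow_succ']
    exact pow_mulVec_mem_krylov (by omega)
  | zero => simp
  | add x y _ _ hx hy => rw [mulVec_add]; exact add_mem hx hy
  | smul a x _ hx => rw [mulVec_smul]; exact Submodule.smul_mem _ a hx

theorem krylov_succ_eq_sup_span_singleton (hv : v ∈ krylov M r0 (k + 1))
    (hv' : v ∉ krylov M r0 k) : krylov M r0 (k + 1) = krylov M r0 k ⊔ ℝ ∙ v := by
  have hexch : (M ^ k) *ᵥ r0 ∈ ℝ ∙ v ⊔ krylov M r0 k := by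
    have := mem_span_insert_exchange (K := ℝ) (y := (M ^ k) *ᵥ r0)
      (s := (krylov M r0 k : Set (Fin n → ℝ)))
      (by rwa [Submodule.span_insert, Submodule.span_eq, sup_comm, ← krylov_succ])
      (by rwa [Submodule.span_eq])
    rwa [Submodule.span_insert, Submodule.span_eq] at this
  refine le_antisymm ?_
    (sup_le (krylov_mono k.le_succ) ((Submodule.span_singleton_le_iff_mem _ _).2 hv))
  rw [krylov_succ, sup_comm (b := ℝ ∙ v)]
  exact sup_le le_sup_right ((Submodule.span_singleton_le_iff_mem _ _).2 hexch)

theorem krylov_succ_le_of_one_sub_mulVec {D : Submodule ℝ (Fin n → ℝ)} (h0 : r0 ∈ D)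
    (h : ∀ v ∈ krylov M r0 k, (1 - M) *ᵥ v ∈ D) : krylov M r0 (k + 1) ≤ D := by
  rw [krylov, Submodule.span_le]
  rintro _ ⟨i, hi, rfl⟩
  induction i with
  | zero => simpa using h0
  | succ i ih =>
    have hpow : (M ^ (i + 1)) *ᵥ r0 = (M ^ i) *ᵥ r0 - (1 - M) *ᵥ ((M ^ i) *ᵥ r0) := by
      rw [sub_mulVec, one_mulVec, mulVec_mulVec, ← pow_succ']; abel
    rw [SetLike.mem_coe, hpow]
    exact D.sub_mem (ih (by omega)) (h _ (pow_mulVec_mem_krylov (by omega)))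

end Krylov

section Residual

variable {n : ℕ} {M : Matrix (Fin n) (Fin n) ℝ} {c x0 x y : Fin n → ℝ} {k : ℕ}

theorem residv_eq_add_mulVec_sub (x0 : Fin n → ℝ) :
    residv M c x = residv M c x0 + M *ᵥ (x - x0) := by
  simp only [residv, mulVec_sub]; abel

theorem residv_injective (hM : Function.Injective M.mulVec) : Function.Injective (residv M c) :=
  fun _ _ h => hM (sub_left_injective h)

theorem qmap_eq_sub_residv : qmap M c x = x - residv M c x := by
  simp only [qmap, residv, sub_mulVec, one_mulVec]; abel

theorem qmap_sub_qmap : qmap M c x - qmap M c y = (1 - M) *ᵥ (x - y) := by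
  simp only [qmap, mulVec_sub]; abel

theorem residv_add_sum_smul_sub {α : Type*} (s : Finset α) (γ : α → ℝ) (z : α → Fin n → ℝ) :
    residv M c (x + ∑ i ∈ s, γ i • (x - z i))
      = residv M c x + ∑ i ∈ s, γ i • (residv M c x - residv M c (z i)) := by
  simp only [residv, mulVec_add, mulVec_sum, mulVec_smul, mulVec_sub, sub_sub_sub_cancel_right]
  abel

theorem qmap_add_sum_smul_sub {α : Type*} (s : Finset α) (γ : α → ℝ) (z : α → Fin n → ℝ) :
    qmap M c (x + ∑ i ∈ s, γ i • (x - z i))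
      = qmap M c x + ∑ i ∈ s, γ i • (qmap M c x - qmap M c (z i)) := by
  rw [qmap_eq_sub_residv, residv_add_sum_smul_sub]
  simp only [qmap_eq_sub_residv, smul_sub, Finset.sum_sub_distrib]
  abel

theorem residv_mem_krylov_succ (h : x - x0 ∈ krylov M (residv M c x0) k) :
    residv M c x ∈ krylov M (residv M c x0) (k + 1) := by
  rw [residv_eq_add_mulVec_sub (x := x) x0]
  exact add_mem (self_mem_krylov k.succ_pos) (mulVec_mem_krylov_succ h)

theorem qmap_sub_mem_krylov_succ (h : x - x0 ∈ krylov M (residv M c x0) k) :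
    qmap M c x - x0 ∈ krylov M (residv M c x0) (k + 1) := by
  rw [qmap_eq_sub_residv, sub_right_comm]
  exact sub_mem (krylov_mono k.le_succ h) (residv_mem_krylov_succ h)

theorem krylov_succ_succ_eq_sup_span_residv
    (hx : x - x0 ∈ krylov M (residv M c x0) (k + 1)) (hx' : x - x0 ∉ krylov M (residv M c x0) k) :
    krylov M (residv M c x0) (k + 2)
      = krylov M (residv M c x0) (k + 1) ⊔ ℝ ∙ residv M c x := by
  refine le_antisymm ?_ (sup_le (krylov_mono (by omega))
    ((Submodule.span_singleton_le_iff_mem _ _).2 (residv_mem_krylov_succ hx)))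
  rw [krylov_succ (k + 1)]
  refine sup_le le_sup_left ((Submodule.span_singleton_le_iff_mem _ _).2 ?_)
  have hpow : (M ^ k) *ᵥ residv M c x0 ∈ krylov M (residv M c x0) k ⊔ ℝ ∙ (x - x0) :=
    krylov_succ_eq_sup_span_singleton hx hx' ▸ pow_mulVec_mem_krylov k.lt_succ_self
  obtain ⟨u, hu, w, hw, huw⟩ := Submodule.mem_sup.1 hpow
  obtain ⟨a, rfl⟩ := Submodule.mem_span_singleton.1 hw
  have hsplit : (M ^ (k + 1)) *ᵥ residv M c x0
      = M *ᵥ u + a • (residv M c x - residv M c x0) := by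
    rw [pow_succ', ← mulVec_mulVec, ← huw, mulVec_add, mulVec_smul,
      residv_eq_add_mulVec_sub (x := x) x0, add_sub_cancel_left]
  rw [hsplit]
  exact add_mem (Submodule.mem_sup_left (mulVec_mem_krylov_succ hu))
    (Submodule.smul_mem _ a (sub_mem (Submodule.mem_sup_right (Submodule.mem_span_singleton_self _))
      (Submodule.mem_sup_left (self_mem_krylov k.succ_pos))))

end Residual

section MinResidual

variable {n : ℕ}

def IsMinResidual (M : Matrix (Fin n) (Fin n) ℝ) (c x0 : Fin n → ℝ)
    (K : Submodule ℝ (Fin n → ℝ)) (x : Fin n → ℝ) : Prop :=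
  x - x0 ∈ K ∧ ∀ y, y - x0 ∈ K → norm2 (residv M c x) ≤ norm2 (residv M c y)

variable {M : Matrix (Fin n) (Fin n) ℝ} {c x0 x y : Fin n → ℝ} {K : Submodule ℝ (Fin n → ℝ)}

theorem isMinResidual_bot : IsMinResidual M c x0 ⊥ x0 :=
  ⟨by simp, fun y hy => by rw [Submodule.mem_bot, sub_eq_zero] at hy; rw [hy]⟩

theorem isMinResidual_of_forall_iff {ι : Type*} {F : ι → Fin n → ℝ}
    (hF : ∀ y, y - x0 ∈ K ↔ ∃ i, y = F i) {i₀ : ι} (hx : x = F i₀)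
    (hmin : ∀ i, norm2 (residv M c x) ≤ norm2 (residv M c (F i))) :
    IsMinResidual M c x0 K x :=
  ⟨(hF x).2 ⟨i₀, hx⟩, fun y hy => by obtain ⟨i, rfl⟩ := (hF y).1 hy; exact hmin i⟩

theorem IsMinResidual.residv_eq (hx : IsMinResidual M c x0 K x) (hy : IsMinResidual M c x0 K y) :
    residv M c x = residv M c y := by
  have hmid : (1 / 2 : ℝ) • (x + y) - x0 ∈ K := by
    have : (1 / 2 : ℝ) • (x + y) - x0 = (1 / 2 : ℝ) • ((x - x0) + (y - x0)) := by module
    exact this ▸ K.smul_mem _ (K.add_mem hx.1 hy.1)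
  have hres : residv M c ((1 / 2 : ℝ) • (x + y)) = (1 / 2 : ℝ) • (residv M c x + residv M c y) := by
    simp only [residv, mulVec_smul, mulVec_add]; module
  exact eq_of_norm2_le_norm2_midpoint (hres ▸ hx.2 _ hmid) (hres ▸ hy.2 _ hmid)

theorem IsMinResidual.sub_notMem_of_norm2_lt (hx : IsMinResidual M c x0 K x)
    (hlt : norm2 (residv M c y) < norm2 (residv M c x)) : y - x0 ∉ K :=
  fun hy => (hx.2 y hy).not_gt hlt

end MinResidual

section Iterates

variable {n : ℕ} {M : Matrix (Fin n) (Fin n) ℝ} {c x0 : Fin n → ℝ} {x : ℕ → Fin n → ℝ} {k k0 : ℕ}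

theorem krylov_eq_span_iterates (hx0 : x 0 = x0)
    (hmin : ∀ i ≤ k, IsMinResidual M c x0 (krylov M (residv M c x0) i) (x i))
    (hdec : ∀ i, 0 < i → i ≤ k → norm2 (residv M c (x i)) < norm2 (residv M c (x (i - 1)))) :
    krylov M (residv M c x0) k
      = Submodule.span ℝ ((fun i => x i - x0) '' ↑(Finset.range (k + 1))) := by
  induction k with
  | zero => simp [hx0]
  | succ k ih =>
    have hnew : x (k + 1) - x0 ∉ krylov M (residv M c x0) k :=
      (hmin k k.le_succ).sub_notMem_of_norm2_lt (hdec (k + 1) k.succ_pos le_rfl)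
    rw [Finset.range_add_one, Finset.coe_insert, Set.image_insert_eq, Submodule.span_insert,
      ← ih (fun i hi => hmin i (by omega)) (fun i h0 hi => hdec i h0 (by omega)), sup_comm,
      krylov_succ_eq_sup_span_singleton (hmin (k + 1) le_rfl).1 hnew]

theorem krylov_succ_eq_sup_span_residv (hx0 : x 0 = x0)
    (hmin : ∀ i ≤ k, IsMinResidual M c x0 (krylov M (residv M c x0) i) (x i))
    (hdec : ∀ i, 0 < i → i ≤ k → norm2 (residv M c (x i)) < norm2 (residv M c (x (i - 1)))) :
    krylov M (residv M c x0) (k + 1) = krylov M (residv M c x0) k ⊔ ℝ ∙ residv M c (x k) := by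
  cases k with
  | zero => simp [krylov_succ, hx0]
  | succ k =>
    exact krylov_succ_succ_eq_sup_span_residv (hmin (k + 1) le_rfl).1
      ((hmin k k.le_succ).sub_notMem_of_norm2_lt (hdec (k + 1) k.succ_pos le_rfl))

theorem span_ngmres_directions (hx0 : x 0 = x0)
    (hmin : ∀ i ≤ k, IsMinResidual M c x0 (krylov M (residv M c x0) i) (x i))
    (hdec : ∀ i, 0 < i → i ≤ k → norm2 (residv M c (x i)) < norm2 (residv M c (x (i - 1)))) :
    Submodule.span ℝ ((fun i => qmap M c (x k) - x (k - i)) '' ↑(Finset.range (k + 1)))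
      = krylov M (residv M c x0) (k + 1) := by
  set V := Submodule.span ℝ ((fun i => qmap M c (x k) - x (k - i)) '' ↑(Finset.range (k + 1)))
  have hgen : ∀ i ≤ k, qmap M c (x k) - x (k - i) ∈ V := fun i hi =>
    Submodule.subset_span ⟨i, by simpa [Nat.lt_succ_iff] using hi, rfl⟩
  apply le_antisymm
  · rw [Submodule.span_le]
    rintro _ ⟨i, hi, rfl⟩
    have hi : i ≤ k := Nat.lt_succ_iff.1 (Finset.mem_range.1 hi)
    dsimp only [SetLike.mem_coe]
    rw [← sub_sub_sub_cancel_right _ _ x0]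
    exact sub_mem (qmap_sub_mem_krylov_succ (hmin k le_rfl).1)
      (krylov_mono (by omega) (hmin (k - i) (by omega)).1)
  · have hres : residv M c (x k) ∈ V := by
      simpa [qmap_eq_sub_residv] using neg_mem (hgen 0 k.zero_le)
    have hiter : Submodule.span ℝ ((fun i => x i - x0) '' ↑(Finset.range (k + 1))) ≤ V := by
      rw [Submodule.span_le]
      rintro _ ⟨j, hj, rfl⟩
      have hj : j ≤ k := Nat.lt_succ_iff.1 (Finset.mem_range.1 hj)
      have := sub_mem (hgen k le_rfl) (hgen (k - j) (by omega))
      rwa [Nat.sub_self, hx0, Nat.sub_sub_self hj, sub_sub_sub_cancel_left] at this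
    rw [krylov_succ_eq_sup_span_residv hx0 hmin hdec, krylov_eq_span_iterates hx0 hmin hdec]
    exact sup_le hiter ((Submodule.span_singleton_le_iff_mem _ _).2 hres)

theorem IsNGMRES.isMinResidual {β : ℕ → ℕ → ℝ}
    (h : IsNGMRES M c x0 (fun k => k) x β)
    (hdec : ∀ k, 0 < k → k < k0 →
      norm2 (residv M c (x k)) < norm2 (residv M c (x (k - 1)))) :
    ∀ k ≤ k0, IsMinResidual M c x0 (krylov M (residv M c x0) k) (x k) := by
  intro k hk
  induction k using Nat.strong_induction_on with
  | _ k ih =>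
    cases k with
    | zero => simpa [h.1] using isMinResidual_bot
    | succ k =>
      have hmin : ∀ i ≤ k, IsMinResidual M c x0 (krylov M (residv M c x0) i) (x i) :=
        fun i hi => ih i (by omega) (by omega)
      have hcand := exists_eq_add_sum_smul_iff (qmap_sub_mem_krylov_succ (hmin k le_rfl).1)
        (span_ngmres_directions h.1 hmin fun i h0 hi => hdec i h0 (by omega))
      exact isMinResidual_of_forall_iff (F := fun β' => ngmresUpdate M c x β' k k)
        hcand (h.2 k).1 (h.2 k).2

end Iterates

section Anderson

variable {n : ℕ} {M : Matrix (Fin n) (Fin n) ℝ} {c x0 : Fin n → ℝ} {xNG xA : ℕ → Fin n → ℝ}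
  {m k0 : ℕ}

def aaMix (x : ℕ → Fin n → ℝ) (γ : ℕ → ℝ) (k mk : ℕ) : Fin n → ℝ :=
  x k + ∑ i ∈ Finset.Icc 1 mk, γ i • (x k - x (k - i))

theorem aaUpdate_eq_qmap_aaMix (x : ℕ → Fin n → ℝ) (γ : ℕ → ℝ) (k mk : ℕ) :
    aaUpdate M c x γ k mk = qmap M c (aaMix x γ k mk) :=
  (qmap_add_sum_smul_sub _ _ _).symm

theorem aaObj_eq_residv_aaMix (x : ℕ → Fin n → ℝ) (γ : ℕ → ℝ) (k mk : ℕ) :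
    aaObj M c x γ k mk = residv M c (aaMix x γ k mk) :=
  (residv_add_sum_smul_sub _ _ _).symm

theorem aa_iterate_sub_mem_krylov (hA0 : xA 0 = x0)
    (hA : ∀ l < m, xA (l + 1) = qmap M c (xNG l))
    (hmin : ∀ i < m, IsMinResidual M c x0 (krylov M (residv M c x0) i) (xNG i)) :
    ∀ l ≤ m, xA l - x0 ∈ krylov M (residv M c x0) m
  | 0, _ => by simp [hA0]
  | l + 1, hl => by
    rw [hA l hl]
    exact krylov_mono hl (qmap_sub_mem_krylov_succ (hmin l hl).1)

theorem span_aa_directions (hx0 : xNG 0 = x0) (hA0 : xA 0 = x0)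
    (hA : ∀ l < m, xA (l + 1) = qmap M c (xNG l))
    (hmin : ∀ i < m, IsMinResidual M c x0 (krylov M (residv M c x0) i) (xNG i))
    (hdec : ∀ i, 0 < i → i < m →
      norm2 (residv M c (xNG i)) < norm2 (residv M c (xNG (i - 1)))) :
    Submodule.span ℝ ((fun i => xA m - xA (m - i)) '' ↑(Finset.Icc 1 m))
      = krylov M (residv M c x0) m := by
  have hmem := aa_iterate_sub_mem_krylov hA0 hA hmin
  apply le_antisymm
  · rw [Submodule.span_le]
    rintro _ ⟨i, -, rfl⟩
    dsimp only [SetLike.mem_coe]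
    rw [← sub_sub_sub_cancel_right _ _ x0]
    exact sub_mem (hmem m le_rfl) (hmem (m - i) (by omega))
  cases m with
  | zero => simp
  | succ k =>
    set D := Submodule.span ℝ ((fun i => xA (k + 1) - xA (k + 1 - i)) '' ↑(Finset.Icc 1 (k + 1)))
    have hlast : ∀ l ≤ k + 1, xA (k + 1) - xA l ∈ D := by
      intro l hl
      rcases hl.eq_or_lt with rfl | hl
      · simp
      · have hgen : xA (k + 1) - xA (k + 1 - (k + 1 - l)) ∈ D :=
          Submodule.subset_span ⟨k + 1 - l, by simp only [Finset.coe_Icc, Set.mem_Icc]; omega, rfl⟩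
        rwa [Nat.sub_sub_self hl.le] at hgen
    have hdiff : ∀ l ≤ k + 1, ∀ l' ≤ k + 1, xA l - xA l' ∈ D := fun l hl l' hl' =>
      sub_sub_sub_cancel_left (xA l') (xA l) (xA (k + 1)) ▸ sub_mem (hlast l' hl') (hlast l hl)
    apply krylov_succ_le_of_one_sub_mulVec
    · have := hdiff 0 (by omega) 1 (by omega)
      rwa [hA0, hA 0 k.succ_pos, hx0, qmap_eq_sub_residv, sub_sub_cancel] at this
    · intro v hv
      rw [krylov_eq_span_iterates hx0 (fun i hi => hmin i (by omega))
        (fun i h0 hi => hdec i h0 (by omega))] at hv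
      refine (Submodule.span_le (p := D.comap (1 - M).mulVecLin)).2 ?_ hv
      rintro _ ⟨j, hj, rfl⟩
      have hj : j ≤ k := Nat.lt_succ_iff.1 (Finset.mem_range.1 hj)
      simp only [SetLike.mem_coe, Submodule.mem_comap, mulVecLin_apply]
      rw [← qmap_sub_qmap, ← hA j (by omega), ← hx0, ← hA 0 k.succ_pos]
      exact hdiff _ (by omega) _ (by omega)

theorem IsAA.eq_qmap {γ : ℕ → ℕ → ℝ} (hAA : IsAA M c x0 (fun k => k) xA γ)
    (hM : Function.Injective M.mulVec) (hx0 : xNG 0 = x0)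
    (hmin : ∀ k ≤ k0, IsMinResidual M c x0 (krylov M (residv M c x0) k) (xNG k))
    (hdec : ∀ k, 0 < k → k < k0 →
      norm2 (residv M c (xNG k)) < norm2 (residv M c (xNG (k - 1)))) :
    ∀ m ≤ k0, xA (m + 1) = qmap M c (xNG m) := by
  intro m hm
  induction m using Nat.strong_induction_on with
  | _ m ih =>
    have hA : ∀ l < m, xA (l + 1) = qmap M c (xNG l) := fun l hl => ih l hl (by omega)
    have hmin' : ∀ i < m, IsMinResidual M c x0 (krylov M (residv M c x0) i) (xNG i) :=
      fun i hi => hmin i (by omega)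
    have hcand := exists_eq_add_sum_smul_iff (aa_iterate_sub_mem_krylov hAA.1 hA hmin' m le_rfl)
      (span_aa_directions hx0 hAA.1 hA hmin' fun i h0 hi => hdec i h0 (by omega))
    have hmix : IsMinResidual M c x0 (krylov M (residv M c x0) m) (aaMix xA (γ m) m m) :=
      isMinResidual_of_forall_iff (F := fun γ' => aaMix xA γ' m m) hcand rfl fun γ' => by
        simpa only [aaObj_eq_residv_aaMix] using (hAA.2 m).2 γ'
    rw [(hAA.2 m).1, aaUpdate_eq_qmap_aaMix, residv_injective hM (hmix.residv_eq (hmin m hm))]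

end Anderson

theorem stmt5_general (n : ℕ) (A P : Matrix (Fin n) (Fin n) ℝ) (b x0 : Fin n → ℝ)
    (hP : IsUnit P.det)
    (xNG xG xA : ℕ → Fin n → ℝ) (β γ : ℕ → ℕ → ℝ)
    (hNG : IsNGMRES (P⁻¹ * A) (P⁻¹.mulVec b) x0 (fun k => k) xNG β)
    (hG : IsGMRES (P⁻¹ * A) (P⁻¹.mulVec b) x0 xG)
    (hAA : IsAA (P⁻¹ * A) (P⁻¹.mulVec b) x0 (fun k => k) xA γ)
    (k0 : ℕ)
    (hdec : ∀ k, 0 < k → k < k0 →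
      norm2 (residv (P⁻¹ * A) (P⁻¹.mulVec b) (xNG k)) <
        norm2 (residv (P⁻¹ * A) (P⁻¹.mulVec b) (xNG (k - 1)))) :
    (∀ j ≤ k0,
      residv (P⁻¹ * A) (P⁻¹.mulVec b) (xNG j) = residv (P⁻¹ * A) (P⁻¹.mulVec b) (xG j)) ∧
    (IsUnit A.det → ∀ j ≤ k0, xNG j = xG j ∧
      xA (j + 1) = qmap (P⁻¹ * A) (P⁻¹.mulVec b) (xNG j) ∧
      qmap (P⁻¹ * A) (P⁻¹.mulVec b) (xNG j)
        = xNG j - residv (P⁻¹ * A) (P⁻¹.mulVec b) (xNG j)) := by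
  have hNGmin := hNG.isMinResidual hdec
  have hres : ∀ j ≤ k0, residv (P⁻¹ * A) (P⁻¹.mulVec b) (xNG j)
      = residv (P⁻¹ * A) (P⁻¹.mulVec b) (xG j) :=
    fun j hj => (hNGmin j hj).residv_eq (hG.2 j)
  refine ⟨hres, fun hA j hj => ?_⟩
  have hM : Function.Injective (P⁻¹ * A).mulVec := mulVec_injective_iff_isUnit.2 <|
    (isUnit_iff_isUnit_det _).2 <| by
      rw [det_mul]; exact (isUnit_nonsing_inv_det P hP).mul hA
  exact ⟨residv_injective hM (hres j hj), hAA.eq_qmap hM hNG.1 hNGmin hdec j hj,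
    qmap_eq_sub_residv⟩

/-- the left-preconditioned version.  With `A = P - N`, `P` nonsingular, full
NGMRES and full AA applied to `q_pr(x) = (I - P⁻¹A)x + P⁻¹b` and GMRES applied to
`P⁻¹A x = P⁻¹ b`, the preconditioned residuals of NGMRES and GMRES coincide up to `k0`;
if `A` is invertible the iterates coincide and AA satisfies
`x_{j+1}^A = q_pr(x_j^{NG}) = x_j^{NG} - r_{j,pr}^{NG}`. -/
theorem stmt5 (n : ℕ) (A P N : Matrix (Fin n) (Fin n) ℝ) (b x0 xstar : Fin n → ℝ)
    (hP : IsUnit P.det) (hPN : A = P - N)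
    (xNG xG xA : ℕ → Fin n → ℝ) (β γ : ℕ → ℕ → ℝ)
    (hNG : IsNGMRES (P⁻¹ * A) (P⁻¹.mulVec b) x0 (fun k => k) xNG β)
    (hG : IsGMRES (P⁻¹ * A) (P⁻¹.mulVec b) x0 xG)
    (hAA : IsAA (P⁻¹ * A) (P⁻¹.mulVec b) x0 (fun k => k) xA γ)
    (hstar : A.mulVec xstar = b) (hx0 : x0 ≠ xstar)
    (k0 : ℕ) (hk0 : 0 < k0)
    (hrk0 : residv (P⁻¹ * A) (P⁻¹.mulVec b) (xNG (k0 - 1)) ≠ 0)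
    (hdec : ∀ k, 0 < k → k < k0 →
      norm2 (residv (P⁻¹ * A) (P⁻¹.mulVec b) (xNG k)) <
        norm2 (residv (P⁻¹ * A) (P⁻¹.mulVec b) (xNG (k - 1)))) :
    (∀ j ≤ k0,
      residv (P⁻¹ * A) (P⁻¹.mulVec b) (xNG j) = residv (P⁻¹ * A) (P⁻¹.mulVec b) (xG j)) ∧
    (IsUnit A.det → ∀ j ≤ k0, xNG j = xG j ∧
      xA (j + 1) = qmap (P⁻¹ * A) (P⁻¹.mulVec b) (xNG j) ∧
      qmap (P⁻¹ * A) (P⁻¹.mulVec b) (xNG j)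
        = xNG j - residv (P⁻¹ * A) (P⁻¹.mulVec b) (xNG j)) :=
  stmt5_general n A P b x0 hP xNG xG xA β γ hNG hG hAA k0 hdec
end
end

section
/- The residuals of NGMRES (with any window size m, including the full version m_k = k) satisfy r_{k+1}ᵀ (r_{k+1} − r_k) = 0; consequently, for each k, either r_{k+1} = r_k or ‖r_k‖₂ > ‖r_{k+1}‖₂, so the 2-norms of the NGMRES residuals are nonincreasing. -/
open Matrix Filter

noncomputable section

/-!
Choosing `β = -e₀` reproduces `x_k`, and the update is affine in `β`, so the attainable
residuals contain the whole line through `r_{k+1}` and `r_k`. As `r_{k+1}` has minimal norm on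
that line, `r_{k+1} ⟂ r_k - r_{k+1}`, and Pythagoras gives
`‖r_k‖² = ‖r_{k+1}‖² + ‖r_k - r_{k+1}‖²`.
-/

section DotProduct

variable {ι R K : Type*} [Fintype ι]

theorem dotProduct_self_nonneg [Ring R] [LinearOrder R] [IsStrictOrderedRing R] (v : ι → R) :
    0 ≤ v ⬝ᵥ v :=
  Finset.sum_nonneg fun i _ => mul_self_nonneg (v i)

theorem dotProduct_self_eq_add_of_dotProduct_sub_eq_zero [CommRing R] {u v : ι → R}
    (h : u ⬝ᵥ (u - v) = 0) : v ⬝ᵥ v = u ⬝ᵥ u + (v - u) ⬝ᵥ (v - u) := by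
  simp only [dotProduct_sub, sub_dotProduct, dotProduct_comm v u] at h ⊢
  linear_combination -2 * h

theorem dotProduct_eq_zero_of_forall_dotProduct_self_le [Field K] [LinearOrder K]
    [IsStrictOrderedRing K] {u w : ι → K}
    (h : ∀ t : K, u ⬝ᵥ u ≤ (u + t • w) ⬝ᵥ (u + t • w)) : u ⬝ᵥ w = 0 := by
  have hquad : ∀ t : K, 0 ≤ w ⬝ᵥ w * (t * t) + 2 * (u ⬝ᵥ w) * t + 0 := fun t => by
    have := h t
    simp only [add_dotProduct, dotProduct_add, smul_dotProduct, dotProduct_smul, smul_eq_mul,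
      dotProduct_comm w u] at this
    linarith
  have hdiscrim := discrim_le_zero hquad
  rw [discrim] at hdiscrim
  nlinarith [sq_nonneg (u ⬝ᵥ w)]

end DotProduct

section Norm2

variable {n : ℕ}

theorem norm2_le_norm2_iff {u v : Fin n → ℝ} : norm2 u ≤ norm2 v ↔ u ⬝ᵥ u ≤ v ⬝ᵥ v :=
  Real.sqrt_le_sqrt_iff (dotProduct_self_nonneg v)

theorem norm2_lt_norm2_iff {u v : Fin n → ℝ} : norm2 u < norm2 v ↔ u ⬝ᵥ u < v ⬝ᵥ v :=
  Real.sqrt_lt_sqrt_iff (dotProduct_self_nonneg u)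

theorem eq_or_norm2_lt_of_dotProduct_sub_eq_zero {u v : Fin n → ℝ}
    (h : u ⬝ᵥ (u - v) = 0) : u = v ∨ norm2 u < norm2 v := by
  by_cases huv : u = v
  · exact Or.inl huv
  · have hpos : 0 < (v - u) ⬝ᵥ (v - u) :=
      (dotProduct_self_nonneg _).lt_of_ne'
        (dotProduct_self_eq_zero.not.mpr (sub_ne_zero.mpr (Ne.symm huv)))
    rw [norm2_lt_norm2_iff, dotProduct_self_eq_add_of_dotProduct_sub_eq_zero h]
    exact Or.inr (lt_add_of_pos_right _ hpos)

end Norm2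

section NGMRES

variable {n : ℕ} {A : Matrix (Fin n) (Fin n) ℝ} {b : Fin n → ℝ}

theorem residv_add_smul_sub (y z : Fin n → ℝ) (t : ℝ) :
    residv A b (y + t • (z - y)) = residv A b y + t • (residv A b z - residv A b y) := by
  simp only [residv, mulVec_add, mulVec_smul, mulVec_sub]
  module

theorem ngmresUpdate_add_smul_sub (x : ℕ → Fin n → ℝ) (β γ : ℕ → ℝ) (k m : ℕ) (t : ℝ) :
    ngmresUpdate A b x (β + t • (γ - β)) k m =
      ngmresUpdate A b x β k m + t • (ngmresUpdate A b x γ k m - ngmresUpdate A b x β k m) := by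
  simp only [ngmresUpdate, Pi.add_apply, Pi.smul_apply, Pi.sub_apply, smul_eq_mul, add_smul,
    mul_smul, sub_smul, Finset.sum_add_distrib, Finset.sum_sub_distrib, ← Finset.smul_sum]
  module

theorem ngmresUpdate_neg_single_zero (x : ℕ → Fin n → ℝ) (k m : ℕ) :
    ngmresUpdate A b x (-Pi.single 0 1) k m = x k := by
  rw [ngmresUpdate, Finset.sum_eq_single_of_mem 0 (by simp) fun i _ hi => by simp [hi]]
  simp

variable {x0 : Fin n → ℝ} {mk : ℕ → ℕ} {x : ℕ → Fin n → ℝ} {β : ℕ → ℕ → ℝ}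

theorem IsNGMRES.dotProduct_residv_succ_le (hNG : IsNGMRES A b x0 mk x β) (k : ℕ) (t : ℝ) :
    residv A b (x (k + 1)) ⬝ᵥ residv A b (x (k + 1)) ≤
      (residv A b (x (k + 1)) + t • (residv A b (x k) - residv A b (x (k + 1)))) ⬝ᵥ
        (residv A b (x (k + 1)) + t • (residv A b (x k) - residv A b (x (k + 1)))) := by
  obtain ⟨hupdate, hmin⟩ := hNG.2 k
  have hline := hmin (β k + t • (-Pi.single 0 1 - β k))
  rw [ngmresUpdate_add_smul_sub, ngmresUpdate_neg_single_zero, ← hupdate,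
    residv_add_smul_sub] at hline
  exact norm2_le_norm2_iff.mp hline

theorem IsNGMRES.residv_succ_dotProduct_sub_eq_zero (hNG : IsNGMRES A b x0 mk x β) (k : ℕ) :
    residv A b (x (k + 1)) ⬝ᵥ (residv A b (x (k + 1)) - residv A b (x k)) = 0 := by
  rw [← neg_sub, dotProduct_neg, neg_eq_zero]
  exact dotProduct_eq_zero_of_forall_dotProduct_self_le (hNG.dotProduct_residv_succ_le k)

end NGMRES

theorem stmt11_general (n : ℕ) (A : Matrix (Fin n) (Fin n) ℝ) (b x0 : Fin n → ℝ)
    (mk : ℕ → ℕ)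
    (x : ℕ → Fin n → ℝ) (β : ℕ → ℕ → ℝ)
    (hNG : IsNGMRES A b x0 mk x β) :
    ∀ k,
      residv A b (x (k + 1)) ⬝ᵥ (residv A b (x (k + 1)) - residv A b (x k)) = 0 ∧
      (residv A b (x (k + 1)) = residv A b (x k) ∨
        norm2 (residv A b (x (k + 1))) < norm2 (residv A b (x k))) ∧
      norm2 (residv A b (x (k + 1))) ≤ norm2 (residv A b (x k)) := by
  intro k
  have horth := hNG.residv_succ_dotProduct_sub_eq_zero k
  have hdecrease := eq_or_norm2_lt_of_dotProduct_sub_eq_zero horth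
  refine ⟨horth, hdecrease, ?_⟩
  rcases hdecrease with heq | hlt
  · exact heq ▸ le_rfl
  · exact hlt.le

/-- `r_{k+1}ᵀ (r_{k+1} - r_k) = 0`; consequently either `r_{k+1} = r_k`
or `‖r_k‖ > ‖r_{k+1}‖`, so the NGMRES residual norms are nonincreasing. -/
theorem stmt11 (n : ℕ) (A : Matrix (Fin n) (Fin n) ℝ) (b x0 : Fin n → ℝ)
    (mk : ℕ → ℕ) (hmk : ∀ k, mk k ≤ k)
    (x : ℕ → Fin n → ℝ) (β : ℕ → ℕ → ℝ)
    (hNG : IsNGMRES A b x0 mk x β) :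
    ∀ k,
      residv A b (x (k + 1)) ⬝ᵥ (residv A b (x (k + 1)) - residv A b (x k)) = 0 ∧
      (residv A b (x (k + 1)) = residv A b (x k) ∨
        norm2 (residv A b (x (k + 1))) < norm2 (residv A b (x k))) ∧
      norm2 (residv A b (x (k + 1))) ≤ norm2 (residv A b (x k)) :=
  stmt11_general n A b x0 mk x β hNG

end
end
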